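/- Let d ≥ 1 and N ≥ 1 be integers, set M = N^d, and let f : ℝ^d → ℝ be C² on [0,1]^d. For each J = (J₁,…,J_d) ∈ {0,1,…,N−1}^d let x_J be the midpoint of the cube ∏_{i=1}^d [J_i/N, (J_i+1)/N]. Then | ∫_{[0,1]^d} f(x) dx − (1/M) ∑_{J} f(x_J) | ≤ (1/24) · ( ∑_{i=1}^d sup_{x ∈ [0,1]^d} |∂²f/∂x_i²(x)| ) · M^{−2/d}. -/

import Mathlib

/-!
The product midpoint rule is the tensor product of composite midpoint rules in each coordinate.
Integrating out the first coordinate (Fubini) and averaging `f` over the first coordinate of the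
nodes, an induction on `d` bounds its error by the sum, over the directions `i`, of the
one-dimensional errors along lines parallel to the `i`-th axis.

On a cell of half-width `h` centred at `c`, the midpoint error of `g` is
`∫₀ʰ (g (c + t) + g (c - t) - 2 g c) dt`; the integrand vanishes with its derivative at `0` and
has second derivative at most `2 sup |g''|`, so the cell error is at most `sup |g''| (2h)³ / 24`.
Summing `N` cells of width `1 / N` gives `sup |g''| / (24 N²)`, and `N⁻² = M^(-2/d)`.

The supremum in the bound is over the global second partials `pdPi i (pdPi i f)`, which take
junk values on the boundary of the cube, where `f` need not be differentiable. They agree with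
the one-sided second derivatives on the dense interior, and elsewhere are either `0` or again
the one-sided value; as the one-sided derivatives are continuous up to the boundary, they are
bounded by that supremum on the whole cube.
-/

open MeasureTheory Set

noncomputable section

/-- Partial derivative of a function on `Fin d → ℝ` in the `i`-th coordinate direction. -/
def pdPi {d : ℕ} (i : Fin d) (g : (Fin d → ℝ) → ℝ) : (Fin d → ℝ) → ℝ :=
  fun x => fderiv ℝ g x (Pi.single i 1)

theorem abs_le_of_abs_deriv_le_mul_pow {φ φ' : ℝ → ℝ} {h c : ℝ} {n : ℕ}
    (hφ : ∀ t ∈ Icc 0 h, HasDerivWithinAt φ (φ' t) (Icc 0 h) t) (hφ0 : φ 0 = 0)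
    (hφ' : ∀ t ∈ Icc 0 h, |φ' t| ≤ c * t ^ n) :
    ∀ t ∈ Icc 0 h, |φ t| ≤ c / (n + 1) * t ^ (n + 1) := by
  have hB (t : ℝ) : HasDerivAt (fun t ↦ c / (n + 1) * t ^ (n + 1)) (c * t ^ n) t := by
    refine ((hasDerivAt_pow (n + 1) t).const_mul (c / (n + 1))).congr_deriv ?_
    push_cast
    field_simp
  simpa [hφ0] using image_norm_le_of_norm_deriv_right_le_deriv_boundary
    (fun t ht ↦ (hφ t ht).continuousWithinAt)
    (fun t ht ↦ (hφ t (Ico_subset_Icc_self ht)).mono_of_mem_nhdsWithin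
      (Icc_mem_nhdsGE_of_mem ht)) (by simp [hφ0]) hB
    (fun t ht ↦ hφ' t (Ico_subset_Icc_self ht))

theorem abs_add_sub_two_mul_le_mul_sq {g g' g'' : ℝ → ℝ} {c h C : ℝ}
    (hg : ∀ t ∈ Icc (c - h) (c + h), HasDerivWithinAt g (g' t) (Icc (c - h) (c + h)) t)
    (hg' : ∀ t ∈ Icc (c - h) (c + h), HasDerivWithinAt g' (g'' t) (Icc (c - h) (c + h)) t)
    (hC : ∀ t ∈ Icc (c - h) (c + h), |g'' t| ≤ C) :
    ∀ t ∈ Icc 0 h, |g (c + t) + g (c - t) - 2 * g c| ≤ C * t ^ 2 := by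
  have hmaps_add : MapsTo (c + ·) (Icc 0 h) (Icc (c - h) (c + h)) :=
    fun t ht ↦ by constructor <;> linarith [ht.1, ht.2]
  have hmaps_sub : MapsTo (c - ·) (Icc 0 h) (Icc (c - h) (c + h)) :=
    fun t ht ↦ by constructor <;> linarith [ht.1, ht.2]
  have hadd {u u' : ℝ → ℝ}
      (hu : ∀ t ∈ Icc (c - h) (c + h), HasDerivWithinAt u (u' t) (Icc (c - h) (c + h)) t)
      (t : ℝ) (ht : t ∈ Icc 0 h) :
      HasDerivWithinAt (fun t ↦ u (c + t)) (u' (c + t)) (Icc 0 h) t :=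
    ((hu _ (hmaps_add ht)).comp t ((hasDerivAt_id t).const_add c).hasDerivWithinAt
      hmaps_add).congr_deriv (mul_one _)
  have hsub {u u' : ℝ → ℝ}
      (hu : ∀ t ∈ Icc (c - h) (c + h), HasDerivWithinAt u (u' t) (Icc (c - h) (c + h)) t)
      (t : ℝ) (ht : t ∈ Icc 0 h) :
      HasDerivWithinAt (fun t ↦ u (c - t)) (-u' (c - t)) (Icc 0 h) t :=
    ((hu _ (hmaps_sub ht)).comp t ((hasDerivAt_id t).const_sub c).hasDerivWithinAt
      hmaps_sub).congr_deriv (mul_neg_one _)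
  have hderiv : ∀ t ∈ Icc 0 h, HasDerivWithinAt (fun t ↦ g (c + t) + g (c - t) - 2 * g c)
      (g' (c + t) - g' (c - t)) (Icc 0 h) t := fun t ht ↦
    (((hadd hg t ht).add (hsub hg t ht)).sub_const _).congr_deriv (sub_eq_add_neg _ _).symm
  have hderiv' : ∀ t ∈ Icc 0 h, HasDerivWithinAt (fun t ↦ g' (c + t) - g' (c - t))
      (g'' (c + t) + g'' (c - t)) (Icc 0 h) t := fun t ht ↦
    ((hadd hg' t ht).sub (hsub hg' t ht)).congr_deriv (sub_neg_eq_add _ _)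
  have hderiv_le : ∀ t ∈ Icc 0 h, |g' (c + t) - g' (c - t)| ≤ 2 * C * t := by
    simpa using abs_le_of_abs_deriv_le_mul_pow hderiv' (by simp) (n := 0) (c := 2 * C)
      fun t ht ↦ by
        linarith [abs_add_le (g'' (c + t)) (g'' (c - t)), hC _ (hmaps_add ht),
          hC _ (hmaps_sub ht)]
  intro t ht
  convert abs_le_of_abs_deriv_le_mul_pow hderiv (by ring_nf) (n := 1) (c := 2 * C)
    (by simpa using hderiv_le) t ht using 1
  ring

theorem intervalIntegral_sub_two_mul_eq_integral_add_sub {g : ℝ → ℝ} {c h : ℝ} (hh : 0 ≤ h)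
    (hg : ContinuousOn g (Icc (c - h) (c + h))) :
    (∫ t in (c - h)..(c + h), g t) - 2 * h * g c =
      ∫ t in 0..h, (g (c + t) + g (c - t) - 2 * g c) := by
  have hint {a b : ℝ} (hab : a ≤ b) (hsub : Icc a b ⊆ Icc (c - h) (c + h)) :
      IntervalIntegrable g volume a b :=
    (hg.mono hsub).intervalIntegrable_of_Icc hab
  have hadd : IntervalIntegrable (fun t ↦ g (c + t)) volume 0 h :=
    (hg.comp (by fun_prop) fun t ht ↦ by
      constructor <;> linarith [ht.1, ht.2]).intervalIntegrable_of_Icc hh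
  have hsub : IntervalIntegrable (fun t ↦ g (c - t)) volume 0 h :=
    (hg.comp (by fun_prop) fun t ht ↦ by
      constructor <;> linarith [ht.1, ht.2]).intervalIntegrable_of_Icc hh
  rw [intervalIntegral.integral_sub (hadd.add hsub) intervalIntegrable_const,
    intervalIntegral.integral_add hadd hsub, intervalIntegral.integral_comp_add_left,
    intervalIntegral.integral_comp_sub_left, add_zero, sub_zero,
    add_comm (∫ x in c..c + h, g x),
    intervalIntegral.integral_add_adjacent_intervals
      (hint (by linarith) (Icc_subset_Icc le_rfl (by linarith)))
      (hint (by linarith) (Icc_subset_Icc (by linarith) le_rfl)),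
    intervalIntegral.integral_const, smul_eq_mul]
  ring

theorem abs_intervalIntegral_sub_mul_midpoint_le {g g' g'' : ℝ → ℝ} {a b C : ℝ}
    (hab : a ≤ b) (hg : ∀ t ∈ Icc a b, HasDerivWithinAt g (g' t) (Icc a b) t)
    (hg' : ∀ t ∈ Icc a b, HasDerivWithinAt g' (g'' t) (Icc a b) t)
    (hC : ∀ t ∈ Icc a b, |g'' t| ≤ C) :
    |(∫ t in a..b, g t) - (b - a) * g ((a + b) / 2)| ≤ C * (b - a) ^ 3 / 24 := by
  obtain ⟨c, h, rfl, rfl⟩ : ∃ c h, a = c - h ∧ b = c + h :=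
    ⟨(a + b) / 2, (b - a) / 2, by ring, by ring⟩
  have hh : 0 ≤ h := by linarith
  rw [show c + h - (c - h) = 2 * h by ring, show (c - h + (c + h)) / 2 = c by ring,
    intervalIntegral_sub_two_mul_eq_integral_add_sub hh
      fun t ht ↦ (hg t ht).continuousWithinAt,
    ← Real.norm_eq_abs]
  calc _ ≤ ∫ t in 0..h, C * t ^ 2 :=
        intervalIntegral.norm_integral_le_of_norm_le hh
          (.of_forall fun t ht ↦
            abs_add_sub_two_mul_le_mul_sq hg hg' hC t (Ioc_subset_Icc_self ht))
          ((by fun_prop : Continuous fun t : ℝ ↦ C * t ^ 2).intervalIntegrable 0 h)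
    _ = C * (2 * h) ^ 3 / 24 := by
        rw [intervalIntegral.integral_const_mul, integral_pow]
        ring

theorem abs_setIntegral_sub_compositeMidpoint_le {g g' g'' : ℝ → ℝ} {C : ℝ} {N : ℕ}
    (hN : 0 < N) (hg : ∀ t ∈ Icc 0 1, HasDerivWithinAt g (g' t) (Icc 0 1) t)
    (hg' : ∀ t ∈ Icc 0 1, HasDerivWithinAt g' (g'' t) (Icc 0 1) t)
    (hC : ∀ t ∈ Icc (0 : ℝ) 1, |g'' t| ≤ C) :
    |(∫ t in Icc 0 1, g t) - 1 / N * ∑ j : Fin N, g ((j + 1 / 2) / N)| ≤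
      C / (24 * N ^ 2) := by
  have hN' : (0 : ℝ) < N := Nat.cast_pos.mpr hN
  have hcell {j : ℕ} (hj : j < N) : Icc ((j : ℝ) / N) ((j + 1 : ℕ) / N) ⊆ Icc 0 1 := by
    have : ((j + 1 : ℕ) : ℝ) ≤ N := by exact_mod_cast hj
    exact Icc_subset_Icc (by positivity) ((div_le_one hN').mpr this)
  have hsplit : ∫ t in Icc 0 1, g t =
      ∑ j ∈ Finset.range N, ∫ t in ((j : ℝ) / N)..((j + 1 : ℕ) / N), g t := by
    rw [intervalIntegral.sum_integral_adjacent_intervals, integral_Icc_eq_integral_Ioc,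
      ← intervalIntegral.integral_of_le zero_le_one]
    · simp [hN'.ne']
    · intro j hj
      refine (ContinuousOn.mono (fun t ht ↦ (hg t ht).continuousWithinAt)
        (hcell hj)).intervalIntegrable_of_Icc ?_
      gcongr
      simp
  have hcell_error {j : ℕ} (hj : j < N) :
      |(∫ t in ((j : ℝ) / N)..((j + 1 : ℕ) / N), g t) - 1 / N * g ((j + 1 / 2) / N)| ≤
        C / (24 * N ^ 3) := by
    have := abs_intervalIntegral_sub_mul_midpoint_le (by gcongr; simp)
      (fun t ht ↦ (hg t (hcell hj ht)).mono (hcell hj))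
      (fun t ht ↦ (hg' t (hcell hj ht)).mono (hcell hj)) (fun t ht ↦ hC t (hcell hj ht))
    rw [show ((j + 1 : ℕ) : ℝ) / N - j / N = 1 / N by push_cast; ring,
      show ((j : ℝ) / N + (j + 1 : ℕ) / N) / 2 = (j + 1 / 2) / N by push_cast; ring] at this
    exact this.trans_eq (by field_simp)
  rw [hsplit, Fin.sum_univ_eq_sum_range (fun j ↦ g ((j + 1 / 2) / N)), Finset.mul_sum,
    ← Finset.sum_sub_distrib]
  calc _ ≤ ∑ j ∈ Finset.range N, C / (24 * N ^ 3) :=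
        (Finset.abs_sum_le_sum_abs _ _).trans
          (Finset.sum_le_sum fun j hj ↦ hcell_error (Finset.mem_range.mp hj))
    _ = C / (24 * N ^ 2) := by
        rw [Finset.sum_const, Finset.card_range, nsmul_eq_mul]
        field_simp

theorem Function.update_mem_Icc {ι α : Type*} [DecidableEq ι] [Preorder α] {a b x : ι → α}
    (hx : x ∈ Icc a b) {i : ι} {s : α} (hs : s ∈ Icc (a i) (b i)) :
    Function.update x i s ∈ Icc a b :=
  ⟨le_update_iff.2 ⟨hs.1, fun j _ ↦ hx.1 j⟩, update_le_iff.2 ⟨hs.2, fun j _ ↦ hx.2 j⟩⟩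

theorem Fin.cons_mem_Icc_zero_one {d : ℕ} {s : ℝ} {y : Fin d → ℝ} :
    (Fin.cons s y : Fin (d + 1) → ℝ) ∈ Icc 0 1 ↔ s ∈ Icc 0 1 ∧ y ∈ Icc 0 1 := by
  simp only [mem_Icc, Pi.le_def, Fin.forall_fin_succ, Fin.cons_zero, Fin.cons_succ, Pi.zero_apply,
    Pi.one_apply]
  tauto

theorem abs_mean_le {N : ℕ} {a : Fin N → ℝ} {E : ℝ} (hE : 0 ≤ E) (ha : ∀ j, |a j| ≤ E) :
    |1 / N * ∑ j, a j| ≤ E := by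
  rcases N.eq_zero_or_pos with rfl | hN
  · simpa using hE
  calc |1 / N * ∑ j, a j| ≤ 1 / N * ∑ _j : Fin N, E := by
        rw [abs_mul, abs_of_nonneg (by positivity)]
        gcongr
        exact (Finset.abs_sum_le_sum_abs _ _).trans (Finset.sum_le_sum fun j _ ↦ ha j)
    _ = E := by
        rw [Finset.sum_const, Finset.card_univ, Fintype.card_fin, nsmul_eq_mul]
        field_simp

theorem setIntegral_Icc_eq_integral_integral_cons {d : ℕ} {a b : Fin (d + 1) → ℝ}
    {f : (Fin (d + 1) → ℝ) → ℝ} (hf : IntegrableOn f (Icc a b)) :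
    ∫ x in Icc a b, f x =
      ∫ y in Icc (Fin.tail a) (Fin.tail b), ∫ s in Icc (a 0) (b 0), f (Fin.cons s y) := by
  set e : ℝ × (Fin d → ℝ) ≃ᵐ (Fin (d + 1) → ℝ) :=
    (MeasurableEquiv.piFinSuccAbove (fun _ ↦ ℝ) 0).symm
  have he : MeasurePreserving e := (volume_preserving_piFinSuccAbove (fun _ ↦ ℝ) 0).symm _
  have he_apply (p : ℝ × (Fin d → ℝ)) : e p = Fin.cons p.1 p.2 := by
    simp [e, MeasurableEquiv.piFinSuccAbove_symm_apply, Fin.insertNthEquiv, Fin.insertNth_zero']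
  have hpre : e ⁻¹' Icc a b = Icc (a 0) (b 0) ×ˢ Icc (Fin.tail a) (Fin.tail b) :=
    ((Fin.insertNthOrderIso (fun _ ↦ ℝ) 0).preimage_Icc _ _).trans (Icc_prod_eq _ _)
  have hint : IntegrableOn (fun p ↦ f (e p)) (Icc (a 0) (b 0) ×ˢ Icc (Fin.tail a) (Fin.tail b))
      (volume.prod volume) := by
    rw [← hpre, ← Measure.volume_eq_prod]
    exact (he.integrableOn_comp_preimage e.measurableEmbedding).mpr hf
  rw [← he.map_eq, setIntegral_map_equiv, hpre, Measure.volume_eq_prod, setIntegral_prod _ hint,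
    integral_integral_swap (by rwa [Measure.prod_restrict])]
  simp only [he_apply]

theorem abs_setIntegral_sub_setIntegral_le_of_fiberwise {d : ℕ} {f : (Fin (d + 1) → ℝ) → ℝ}
    {g : (Fin d → ℝ) → ℝ} {E : ℝ} (hf : ContinuousOn f (Icc 0 1))
    (hg : ContinuousOn g (Icc 0 1))
    (hfg : ∀ y ∈ Icc (0 : Fin d → ℝ) 1, |(∫ s in Icc 0 1, f (Fin.cons s y)) - g y| ≤ E) :
    |(∫ x in Icc 0 1, f x) - ∫ y in Icc 0 1, g y| ≤ E := by
  have hfubini {F : (Fin (d + 1) → ℝ) → ℝ} (hF : IntegrableOn F (Icc 0 1)) :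
      ∫ x in Icc 0 1, F x =
        ∫ y in Icc (0 : Fin d → ℝ) 1, ∫ s in Icc (0 : ℝ) 1, F (Fin.cons s y) :=
    setIntegral_Icc_eq_integral_integral_cons hF
  have hfi : IntegrableOn f (Icc 0 1) := hf.integrableOn_compact isCompact_Icc
  have hgi : IntegrableOn (fun x : Fin (d + 1) → ℝ ↦ g (Fin.tail x)) (Icc 0 1) :=
    (hg.comp (by fun_prop) fun x hx ↦ ⟨fun i ↦ hx.1 i.succ, fun i ↦ hx.2 i.succ⟩)
      |>.integrableOn_compact isCompact_Icc
  have hg_lift : ∫ y in Icc 0 1, g y = ∫ x in Icc (0 : Fin (d + 1) → ℝ) 1, g (Fin.tail x) := by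
    simp [hfubini hgi]
  rw [hg_lift, ← integral_sub hfi hgi, hfubini (F := fun x ↦ f x - g (Fin.tail x)) (hfi.sub hgi),
    ← Real.norm_eq_abs]
  refine (norm_setIntegral_le_of_norm_le_const (C := E) isCompact_Icc.measure_lt_top
    fun y hy ↦ ?_).trans_eq (by simp [Measure.real, Real.volume_Icc_pi])
  have hfiber : IntegrableOn (fun s ↦ f (Fin.cons s y)) (Icc 0 1) :=
    (hf.comp (by fun_prop) fun s hs ↦ Fin.cons_mem_Icc_zero_one.2 ⟨hs, hy⟩)
      |>.integrableOn_compact isCompact_Icc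
  simp only [Fin.tail_cons]
  rw [integral_sub hfiber (integrableOn_const (by simp) (C := g y))]
  simpa [Measure.real] using hfg y hy

def productQuadrature {α : Type*} {d N : ℕ} (t : Fin N → α) (f : (Fin d → α) → ℝ) : ℝ :=
  1 / (N : ℝ) ^ d * ∑ J : Fin d → Fin N, f (fun i ↦ t (J i))

theorem productQuadrature_succ {α : Type*} {d N : ℕ} (t : Fin N → α)
    (f : (Fin (d + 1) → α) → ℝ) :
    productQuadrature t f = productQuadrature t fun y ↦ 1 / N * ∑ j, f (Fin.cons (t j) y) := by
  rw [productQuadrature, ← Fintype.sum_equiv (Fin.consEquiv fun _ ↦ Fin N)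
    (fun p ↦ f (Fin.cons (t p.1) fun i ↦ t (p.2 i))) _
    fun p ↦ congrArg f (Fin.comp_cons _ _ _).symm,
    Fintype.sum_prod_type, Finset.sum_comm]
  simp only [productQuadrature, Finset.mul_sum, pow_succ, one_div, mul_inv, mul_assoc]

theorem abs_setIntegral_sub_productQuadrature_le {d N : ℕ} {t : Fin N → ℝ}
    (ht : ∀ j, t j ∈ Icc 0 1) {f : (Fin d → ℝ) → ℝ} (hf : ContinuousOn f (Icc 0 1)) {e : Fin d → ℝ}
    (he : ∀ i, ∀ x ∈ Icc (0 : Fin d → ℝ) 1,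
      |(∫ s in Icc 0 1, f (Function.update x i s)) - 1 / N * ∑ j, f (Function.update x i (t j))| ≤
        e i) :
    |(∫ x in Icc 0 1, f x) - productQuadrature t f| ≤ ∑ i, e i := by
  induction d with
  | zero =>
    rw [Subsingleton.elim (1 : Fin 0 → ℝ) 0, Icc_self, integral_singleton]
    simp [productQuadrature, Measure.real, volume_pi, Subsingleton.elim _ ![]]
  | succ d ih =>
    set g : (Fin d → ℝ) → ℝ := fun y ↦ 1 / N * ∑ j, f (Fin.cons (t j) y)
    have hcons {s : ℝ} (hs : s ∈ Icc 0 1) {y : Fin d → ℝ} (hy : y ∈ Icc 0 1) :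
        (Fin.cons s y : Fin (d + 1) → ℝ) ∈ Icc 0 1 :=
      Fin.cons_mem_Icc_zero_one.2 ⟨hs, hy⟩
    have hg : ContinuousOn g (Icc 0 1) :=
      continuousOn_const.mul <| continuousOn_finsetSum _ fun j _ ↦
        hf.comp (by fun_prop) fun _ hy ↦ hcons (ht j) hy
    -- averaging over the first coordinate preserves the errors along the other coordinates
    have hg_err (i : Fin d) (y) (hy : y ∈ Icc (0 : Fin d → ℝ) 1) :
        |(∫ s in Icc 0 1, g (Function.update y i s)) -
            1 / N * ∑ k, g (Function.update y i (t k))| ≤ e i.succ := by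
      have hline (j) :
          IntegrableOn (fun s ↦ f (Function.update (Fin.cons (t j) y) i.succ s)) (Icc 0 1) :=
        (hf.comp (by fun_prop) fun _ hs ↦ Function.update_mem_Icc (hcons (ht j) hy) hs)
          |>.integrableOn_compact isCompact_Icc
      have hmean : (∫ s in Icc 0 1, g (Function.update y i s)) -
            1 / N * ∑ k, g (Function.update y i (t k)) =
          1 / N * ∑ j, ((∫ s in Icc 0 1, f (Function.update (Fin.cons (t j) y) i.succ s)) -
            1 / N * ∑ k, f (Function.update (Fin.cons (t j) y) i.succ (t k))) := by
        simp only [g, Fin.cons_update]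
        rw [integral_const_mul, integral_finsetSum _ fun j _ ↦ hline j]
        simp only [Finset.mul_sum, mul_sub, Finset.sum_sub_distrib]
        exact congrArg _ Finset.sum_comm
      rw [hmean]
      exact abs_mean_le ((abs_nonneg _).trans (he i.succ 0 (left_mem_Icc.2 zero_le_one)))
        fun j ↦ he i.succ _ (hcons (ht j) hy)
    have hfiber : |(∫ x in Icc 0 1, f x) - ∫ y in Icc 0 1, g y| ≤ e 0 :=
      abs_setIntegral_sub_setIntegral_le_of_fiberwise hf hg fun y hy ↦ by
        simpa only [Fin.update_cons_zero] using
          he 0 (Fin.cons 0 y) (hcons (left_mem_Icc.2 zero_le_one) hy)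
    rw [productQuadrature_succ, Fin.sum_univ_succ]
    calc _ ≤ |(∫ x in Icc 0 1, f x) - ∫ y in Icc 0 1, g y| +
          |(∫ y in Icc 0 1, g y) - productQuadrature t g| := abs_sub_le _ _ _
      _ ≤ _ := add_le_add hfiber (ih hg hg_err)

section SecondDerivative

variable {E F : Type*} [NormedAddCommGroup E] [NormedSpace ℝ E] [NormedAddCommGroup F]
  [NormedSpace ℝ F] {s : Set E}

theorem fderiv_fderiv_apply_eq_fderivWithin_fderivWithin_apply {f : E → F} (hs : Convex ℝ s)
    (hs' : (interior s).Nonempty) (hf : ContDiffOn ℝ 2 f s) (v : E) {y : E} (hy : y ∈ s)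
    (hdiff : DifferentiableAt ℝ (fun z ↦ fderiv ℝ f z v) y) :
    fderiv ℝ (fun z ↦ fderiv ℝ f z v) y v =
      fderivWithin ℝ (fun z ↦ fderivWithin ℝ f s z v) s y v := by
  set D := fun z ↦ fderiv ℝ f z v
  set W := fun z ↦ fderivWithin ℝ f s z v
  have hW : ContDiffOn ℝ 1 W s :=
    (hf.fderivWithin (uniqueDiffOn_convex hs hs') (by norm_num)).clm_apply contDiffOn_const
  have hDW : EqOn D W (interior s) := fun z hz ↦ by
    simp only [D, W, fderivWithin_of_mem_nhds (mem_interior_iff_mem_nhds.mp hz)]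
  have hy' : y ∈ closure (interior s) := by
    rw [hs.closure_interior_eq_closure_of_nonempty_interior hs']
    exact subset_closure hy
  have hDW_ev : D =ᶠ[nhdsWithin y (interior s)] W :=
    Filter.eventuallyEq_of_mem self_mem_nhdsWithin hDW
  -- `D` and `W` agree on the interior, which is dense in `s`, and both are continuous at `y`
  have hDW_y : D y = W y := by
    have := mem_closure_iff_nhdsWithin_neBot.mp hy'
    exact tendsto_nhds_unique (hdiff.continuousAt.tendsto.mono_left nhdsWithin_le_nhds)
      (((hW.continuousOn y hy).mono interior_subset).tendsto.congr' hDW_ev.symm)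
  have hD' : HasFDerivWithinAt D (fderivWithin ℝ W s y) (interior s) y :=
    ((hW.differentiableOn one_ne_zero y hy).hasFDerivWithinAt.mono interior_subset)
      |>.congr_of_eventuallyEq hDW_ev hDW_y
  have hU : UniqueDiffWithinAt ℝ (interior s) y :=
    uniqueDiffWithinAt_convex hs.interior (by rwa [interior_interior]) hy'
  rw [hU.eq hdiff.hasFDerivAt.hasFDerivWithinAt hD']

theorem abs_fderivWithin_fderivWithin_apply_le_sSup {f : E → ℝ} (hs : Convex ℝ s)
    (hs' : (interior s).Nonempty) (hsc : IsCompact s) (hf : ContDiffOn ℝ 2 f s) (v : E) {y : E}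
    (hy : y ∈ s) :
    |fderivWithin ℝ (fun z ↦ fderivWithin ℝ f s z v) s y v| ≤
      sSup ((fun x ↦ |fderiv ℝ (fun z ↦ fderiv ℝ f z v) x v|) '' s) := by
  set D := fun z ↦ fderiv ℝ f z v
  set W := fun z ↦ fderivWithin ℝ f s z v
  set S := sSup ((fun x ↦ |fderiv ℝ D x v|) '' s)
  have hW : ContDiffOn ℝ 1 W s :=
    (hf.fderivWithin (uniqueDiffOn_convex hs hs') (by norm_num)).clm_apply contDiffOn_const
  have hW' : ContinuousOn (fun x ↦ fderivWithin ℝ W s x v) s :=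
    (hW.continuousOn_fderivWithin (uniqueDiffOn_convex hs hs') le_rfl).clm_apply
      continuousOn_const
  obtain ⟨K, hK⟩ := hsc.exists_bound_of_continuousOn hW'
  have hbdd : BddAbove ((fun x ↦ |fderiv ℝ D x v|) '' s) := by
    refine ⟨K, forall_mem_image.2 fun x hx ↦ ?_⟩
    by_cases hdiff : DifferentiableAt ℝ D x
    · rw [fderiv_fderiv_apply_eq_fderivWithin_fderivWithin_apply hs hs' hf v hx hdiff]
      exact hK x hx
    · rw [fderiv_zero_of_not_differentiableAt hdiff, zero_apply, abs_zero]
      exact (norm_nonneg _).trans (hK x hx)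
  have hinterior : MapsTo (fun x ↦ |fderivWithin ℝ W s x v|) (interior s) (Iic S) := by
    intro z hz
    dsimp only
    have hDW : D =ᶠ[nhds z] W := Filter.eventuallyEq_of_mem (isOpen_interior.mem_nhds hz)
      fun x hx ↦ by simp only [D, W, fderivWithin_of_mem_nhds (mem_interior_iff_mem_nhds.mp hx)]
    have hdiff : DifferentiableAt ℝ D z :=
      ((hW.differentiableOn one_ne_zero z (interior_subset hz)).differentiableAt
        (mem_interior_iff_mem_nhds.mp hz)).congr_of_eventuallyEq hDW
    rw [mem_Iic, ← fderiv_fderiv_apply_eq_fderivWithin_fderivWithin_apply hs hs' hf v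
      (interior_subset hz) hdiff]
    exact le_csSup hbdd (mem_image_of_mem _ (interior_subset hz))
  have hy' : y ∈ closure (interior s) := by
    rw [hs.closure_interior_eq_closure_of_nonempty_interior hs']
    exact subset_closure hy
  simpa using ((hW' y hy).abs.mono interior_subset).mem_closure hy' hinterior

end SecondDerivative

theorem abs_setIntegral_update_sub_compositeMidpoint_le {d N : ℕ} (hN : 0 < N)
    {f : (Fin d → ℝ) → ℝ} (hf : ContDiffOn ℝ 2 f (Icc 0 1)) (i : Fin d) {x : Fin d → ℝ}
    (hx : x ∈ Icc 0 1) :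
    |(∫ s in Icc 0 1, f (Function.update x i s)) -
        1 / N * ∑ j : Fin N, f (Function.update x i ((j + 1 / 2) / N))| ≤
      sSup ((fun y ↦ |pdPi i (pdPi i f) y|) '' Icc 0 1) / (24 * N ^ 2) := by
  have hconv : Convex ℝ (Icc (0 : Fin d → ℝ) 1) := convex_Icc 0 1
  have hint : (interior (Icc (0 : Fin d → ℝ) 1)).Nonempty :=
    ⟨fun _ ↦ 1 / 2, mem_interior_iff_mem_nhds.2 (pi_Icc_mem_nhds (by norm_num) (by norm_num))⟩
  have hU := uniqueDiffOn_convex hconv hint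
  have hmaps : MapsTo (Function.update x i) (Icc 0 1) (Icc 0 1) :=
    fun _ hs ↦ Function.update_mem_Icc hx hs
  have hline {u : (Fin d → ℝ) → ℝ} (hu : DifferentiableOn ℝ u (Icc 0 1)) (s : ℝ)
      (hs : s ∈ Icc (0 : ℝ) 1) :
      HasDerivWithinAt (fun s ↦ u (Function.update x i s))
        (fderivWithin ℝ u (Icc 0 1) (Function.update x i s) (Pi.single i 1)) (Icc 0 1) s :=
    (hu _ (hmaps hs)).hasFDerivWithinAt.comp_hasDerivWithinAt s
      (hasDerivAt_update x i s).hasDerivWithinAt hmaps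
  have hf' :
      ContDiffOn ℝ 1 (fun z ↦ fderivWithin ℝ f (Icc 0 1) z (Pi.single i 1)) (Icc 0 1) :=
    (hf.fderivWithin hU (by norm_num)).clm_apply contDiffOn_const
  exact abs_setIntegral_sub_compositeMidpoint_le hN (hline (hf.differentiableOn two_ne_zero))
    (hline (hf'.differentiableOn one_ne_zero)) fun s hs ↦
      abs_fderivWithin_fderivWithin_apply_le_sSup hconv hint isCompact_Icc hf _ (hmaps hs)

theorem midpoint_rule_error_bound_general
    (d N : ℕ) (hN : 1 ≤ N)
    (f : (Fin d → ℝ) → ℝ)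
    (hf : ContDiffOn ℝ 2 f (Icc (0 : Fin d → ℝ) 1)) :
    |(∫ x in Icc (0 : Fin d → ℝ) 1, f x) -
        (1 / ((N ^ d : ℕ) : ℝ)) *
          ∑ J : Fin d → Fin N, f (fun i => ((J i : ℝ) + 1 / 2) / N)|
      ≤ (1 / 24) *
          (∑ i : Fin d,
            sSup ((fun x => |pdPi i (pdPi i f) x|) '' Icc (0 : Fin d → ℝ) 1)) *
          ((N ^ d : ℕ) : ℝ) ^ (-2 / (d : ℝ)) := by
  set C := fun i : Fin d ↦ sSup ((fun x ↦ |pdPi i (pdPi i f) x|) '' Icc (0 : Fin d → ℝ) 1)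
  have hmid (j : Fin N) : ((j : ℝ) + 1 / 2) / N ∈ Icc (0 : ℝ) 1 := by
    have : (j : ℝ) + 1 ≤ N := by exact_mod_cast j.2
    constructor
    · positivity
    · rw [div_le_one (by positivity)]
      linarith
  have hscale : (∑ i, C i) * ((N ^ d : ℕ) : ℝ) ^ (-2 / (d : ℝ)) = (∑ i, C i) / N ^ 2 := by
    rcases eq_or_ne d 0 with rfl | hd
    · simp
    rw [Nat.cast_pow, ← Real.rpow_natCast, ← Real.rpow_mul (Nat.cast_nonneg N),
      mul_div_cancel₀ _ (Nat.cast_ne_zero.2 hd), Real.rpow_neg (Nat.cast_nonneg N), Real.rpow_two,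
      div_eq_mul_inv]
  have := abs_setIntegral_sub_productQuadrature_le hmid hf.continuousOn
    fun i _ hx ↦ abs_setIntegral_update_sub_compositeMidpoint_le hN hf i hx
  rw [mul_assoc, hscale, Nat.cast_pow]
  refine this.trans_eq ?_
  rw [← Finset.sum_div]
  ring

/-- Midpoint quadrature error bound on the unit cube: for `f` of class `C²` on `[0,1]^d`
and `M = N^d` midpoints,
`|∫_{[0,1]^d} f − (1/M) ∑_J f(x_J)| ≤ (1/24)(∑_i sup |∂²f/∂x_i²|) M^{-2/d}`. -/
theorem midpoint_rule_error_bound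
    (d N : ℕ) (hd : 1 ≤ d) (hN : 1 ≤ N)
    (f : (Fin d → ℝ) → ℝ)
    (hf : ContDiffOn ℝ 2 f (Icc (0 : Fin d → ℝ) 1)) :
    |(∫ x in Icc (0 : Fin d → ℝ) 1, f x) -
        (1 / ((N ^ d : ℕ) : ℝ)) *
          ∑ J : Fin d → Fin N, f (fun i => ((J i : ℝ) + 1 / 2) / N)|
      ≤ (1 / 24) *
          (∑ i : Fin d,
            sSup ((fun x => |pdPi i (pdPi i f) x|) '' Icc (0 : Fin d → ℝ) 1)) *
          ((N ^ d : ℕ) : ℝ) ^ (-2 / (d : ℝ)) :=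
  midpoint_rule_error_bound_general d N hN f hf
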